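/- arXiv:2004.07323 — 5 statements merged into one kernel-verified Lean document; each statement's English description precedes it below -/
import Mathlib

section
/- Let n ≥ 1, let E ⊆ ℝⁿ be a nonempty compact set, and let 0 < s < t. Then σ(E, t) ≤ λ(E, s). -/
open MeasureTheory Set Metric Filter ENNReal

/-- The closed `s`-neighborhood of a set `A ⊆ ℝⁿ`. -/
noncomputable def closedNbhd {n : ℕ} (A : Set (EuclideanSpace ℝ (Fin n))) (s : ℝ) :
    Set (EuclideanSpace ℝ (Fin n)) :=
  {x | Metric.infDist x A ≤ s}

/-- The `s`-maximum distance length `λ(E, s)`. -/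
noncomputable def mdLength {n : ℕ} (E : Set (EuclideanSpace ℝ (Fin n))) (s : ℝ) : ℝ≥0∞ :=
  ⨅ (K : Set (EuclideanSpace ℝ (Fin n))) (_ : K.Nonempty) (_ : IsCompact K)
    (_ : IsConnected K) (_ : E ⊆ closedNbhd K s), μH[1] K

/-- The Steiner length `St(X)` of a set `X ⊆ ℝⁿ`. -/
noncomputable def steinerLength {n : ℕ} (X : Set (EuclideanSpace ℝ (Fin n))) : ℝ≥0∞ :=
  ⨅ (S : Set (EuclideanSpace ℝ (Fin n))) (_ : IsCompact S) (_ : IsConnected S)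
    (_ : X ⊆ S), μH[1] S

/-- The `s`-spanning length `σ(E, s)`. -/
noncomputable def spanLength {n : ℕ} (E : Set (EuclideanSpace ℝ (Fin n))) (s : ℝ) : ℝ≥0∞ :=
  ⨅ (X : Set (EuclideanSpace ℝ (Fin n))) (_ : X.Finite) (_ : X.Nonempty)
    (_ : E ⊆ closedNbhd X s), steinerLength X

/-!
Given a compact connected `K` with `E ⊆ B(K, s)`, pick a finite `(t - s)`-net `X ⊆ K`.
Then `E ⊆ B(X, t)` by the triangle inequality, and `K` itself is a compact connected set
containing `X`, so `σ(E, t) ≤ St(X) ≤ H¹(K)`.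
-/

theorem closedNbhd_subset_closedNbhd_add {n : ℕ} {A B : Set (EuclideanSpace ℝ (Fin n))} {r s : ℝ}
    (hA : A.Nonempty) (hAB : A ⊆ closedNbhd B r) :
    closedNbhd A s ⊆ closedNbhd B (s + r) := by
  intro x hx
  have hdist : ∀ a ∈ A, infDist x B - r ≤ dist x a := fun a ha => by
    have hxa := infDist_le_infDist_add_dist (s := B) (x := x) (y := a)
    have haB : infDist a B ≤ r := hAB ha
    linarith
  have hle : infDist x B - r ≤ infDist x A := (le_infDist hA).2 hdist
  change infDist x B ≤ s + r
  linarith [show infDist x A ≤ s from hx]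

theorem IsCompact.exists_finite_nonempty_subset_closedNbhd {n : ℕ}
    {K : Set (EuclideanSpace ℝ (Fin n))} (hK : IsCompact K) (hKne : K.Nonempty)
    {r : ℝ} (hr : 0 < r) :
    ∃ X ⊆ K, X.Finite ∧ X.Nonempty ∧ K ⊆ closedNbhd X r := by
  obtain ⟨X, hXK, hXfin, hcov⟩ := hK.finite_cover_balls hr
  have hKX : K ⊆ closedNbhd X r := fun k hk => by
    obtain ⟨x, hxX, hkx⟩ := mem_iUnion₂.mp (hcov hk)
    exact (infDist_le_dist_of_mem hxX).trans (mem_ball.mp hkx).le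
  obtain ⟨k, hk⟩ := hKne
  obtain ⟨x, hxX, -⟩ := mem_iUnion₂.mp (hcov hk)
  exact ⟨X, hXK, hXfin, ⟨x, hxX⟩, hKX⟩

theorem steinerLength_le_hausdorffMeasure {n : ℕ} {X K : Set (EuclideanSpace ℝ (Fin n))}
    (hK : IsCompact K) (hKconn : IsConnected K) (hXK : X ⊆ K) :
    steinerLength X ≤ μH[1] K :=
  iInf₂_le_of_le K hK <| iInf₂_le hKconn hXK

theorem spanLength_le_steinerLength {n : ℕ} {E X : Set (EuclideanSpace ℝ (Fin n))} {t : ℝ}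
    (hXfin : X.Finite) (hXne : X.Nonempty) (hEX : E ⊆ closedNbhd X t) :
    spanLength E t ≤ steinerLength X :=
  iInf₂_le_of_le X hXfin <| iInf₂_le hXne hEX

theorem spanLength_le_mdLength_of_lt_general {n : ℕ}
    (E : Set (EuclideanSpace ℝ (Fin n)))
    (s t : ℝ) (hst : s < t) :
    spanLength E t ≤ mdLength E s := by
  refine le_iInf₂ fun K hKne => le_iInf₂ fun hKc hKconn => le_iInf fun hEK => ?_
  obtain ⟨X, hXK, hXfin, hXne, hKX⟩ :=
    hKc.exists_finite_nonempty_subset_closedNbhd hKne (sub_pos.2 hst)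
  have hEX : E ⊆ closedNbhd X t := by
    simpa only [add_sub_cancel] using hEK.trans (closedNbhd_subset_closedNbhd_add hKne hKX)
  exact (spanLength_le_steinerLength hXfin hXne hEX).trans
    (steinerLength_le_hausdorffMeasure hKc hKconn hXK)

/-- If `0 < s < t` then `σ(E, t) ≤ λ(E, s)`. -/
theorem spanLength_le_mdLength_of_lt {n : ℕ} (hn : 1 ≤ n)
    (E : Set (EuclideanSpace ℝ (Fin n))) (hE : E.Nonempty) (hEc : IsCompact E)
    (s t : ℝ) (hs : 0 < s) (hst : s < t) :
    spanLength E t ≤ mdLength E s :=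
  spanLength_le_mdLength_of_lt_general E s t hst
end

section
/- Let n ≥ 1, s > 0, R > 2s, and let E ⊆ ℝⁿ be a compact set contained in the closed ball B(0, R − 2s). If K ⊆ ℝⁿ is a nonempty compact connected set with E ⊆ B(K, s), then there exists a nonempty compact connected set K' ⊆ B(0, R) with E ⊆ B(K', s) and H¹(K') ≤ H¹(K). -/
/-!
The radial retraction `P` of `ℝⁿ` onto `B(0, R)` is the metric projection onto a closed convex
set, hence 1-Lipschitz. So `K' := P '' K` is compact, connected, contained in `B(0, R)`, and
`H¹(K') ≤ H¹(K)`. Every point `x ∈ E` lies in `B(0, R)` and is fixed by `P`, so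
`dist x (P y) = dist (P x) (P y) ≤ dist x y` for `y ∈ K`: the retraction brings `K` no farther
from `E`, and `E ⊆ B(K', s)`.
-/

open MeasureTheory Set Metric Filter ENNReal

open scoped RealInnerProductSpace

noncomputable def ballProj {F : Type*} [NormedAddCommGroup F] [NormedSpace ℝ F]
    (R : ℝ) (x : F) : F :=
  if ‖x‖ ≤ R then x else (R / ‖x‖) • x

section BallProj

variable {F : Type*}

lemma ballProj_of_norm_le [NormedAddCommGroup F] [NormedSpace ℝ F] {R : ℝ} {x : F}
    (h : ‖x‖ ≤ R) : ballProj R x = x :=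
  if_pos h

lemma norm_ballProj_le [NormedAddCommGroup F] [NormedSpace ℝ F] {R : ℝ} (hR : 0 ≤ R) (x : F) :
    ‖ballProj R x‖ ≤ R := by
  unfold ballProj
  split_ifs with h
  · exact h
  · have hx : 0 < ‖x‖ := hR.trans_lt (not_le.1 h)
    rw [norm_smul, Real.norm_of_nonneg (div_nonneg hR hx.le), div_mul_cancel₀ _ hx.ne']

variable [NormedAddCommGroup F] [InnerProductSpace ℝ F]

lemma lipschitzWith_one_of_inner_sub_nonpos {P : F → F} {C : Set F} (hPC : ∀ x, P x ∈ C)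
    (hP : ∀ x, ∀ z ∈ C, ⟪x - P x, z - P x⟫ ≤ 0) : LipschitzWith 1 P := by
  refine LipschitzWith.of_dist_le_mul fun x y => ?_
  rw [NNReal.coe_one, one_mul, dist_eq_norm, dist_eq_norm]
  have hx := hP x (P y) (hPC y)
  have hy := hP y (P x) (hPC x)
  have hsplit : ⟪P x - P y, P x - P y⟫
      = ⟪x - y, P x - P y⟫ + ⟪x - P x, P y - P x⟫ + ⟪y - P y, P x - P y⟫ := by
    simp only [inner_sub_left, inner_sub_right]
    rw [real_inner_comm (P x) x, real_inner_comm (P y) x, real_inner_comm (P x) y,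
      real_inner_comm (P y) y]
    ring
  have hfirm : ‖P x - P y‖ ^ 2 ≤ ‖x - y‖ * ‖P x - P y‖ := by
    rw [← real_inner_self_eq_norm_sq]
    linarith [real_inner_le_norm (x - y) (P x - P y)]
  nlinarith [norm_nonneg (P x - P y), norm_nonneg (x - y)]

lemma inner_sub_ballProj_nonpos {R : ℝ} (x : F) {z : F} (hz : ‖z‖ ≤ R) :
    ⟪x - ballProj R x, z - ballProj R x⟫ ≤ 0 := by
  unfold ballProj
  split_ifs with h
  · simp
  · have hx : 0 < ‖x‖ := ((norm_nonneg z).trans hz).trans_lt (not_le.1 h)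
    have hc : 0 ≤ 1 - R / ‖x‖ := by
      rw [sub_nonneg, div_le_one hx]
      exact (not_le.1 h).le
    have hsub : x - (R / ‖x‖) • x = (1 - R / ‖x‖) • x := by rw [sub_smul, one_smul]
    rw [hsub, real_inner_smul_left]
    refine mul_nonpos_of_nonneg_of_nonpos hc ?_
    rw [inner_sub_right, real_inner_smul_right, real_inner_self_eq_norm_sq]
    have hxx : R / ‖x‖ * ‖x‖ ^ 2 = R * ‖x‖ := by field_simp
    nlinarith [real_inner_le_norm x z]

lemma lipschitzWith_one_ballProj {R : ℝ} (hR : 0 ≤ R) : LipschitzWith 1 (ballProj (F := F) R) :=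
  lipschitzWith_one_of_inner_sub_nonpos (C := closedBall 0 R)
    (fun x => mem_closedBall_zero_iff.2 (norm_ballProj_le hR x))
    (fun x _ hz => inner_sub_ballProj_nonpos x (mem_closedBall_zero_iff.1 hz))

end BallProj

lemma infDist_image_le_of_lipschitzWith_one {α : Type*} [PseudoMetricSpace α] {f : α → α}
    (hf : LipschitzWith 1 f) {x : α} (hx : f x = x) (A : Set α) :
    infDist x (f '' A) ≤ infDist x A := by
  rcases A.eq_empty_or_nonempty with rfl | hA
  · simp
  refine (le_infDist hA).2 fun y hy => ?_
  calc infDist x (f '' A) ≤ dist x (f y) := infDist_le_dist_of_mem (mem_image_of_mem f hy)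
    _ = dist (f x) (f y) := by rw [hx]
    _ ≤ dist x y := by simpa using hf.dist_le_mul x y

theorem exists_competitor_in_ball_general {n : ℕ}
    (s R : ℝ) (hs : 0 < s) (hR : 2 * s < R)
    (E : Set (EuclideanSpace ℝ (Fin n)))
    (hER : E ⊆ Metric.closedBall (0 : EuclideanSpace ℝ (Fin n)) (R - 2 * s))
    (K : Set (EuclideanSpace ℝ (Fin n))) (hKc : IsCompact K)
    (hKconn : IsConnected K) (hKcov : E ⊆ closedNbhd K s) :
    ∃ K' : Set (EuclideanSpace ℝ (Fin n)), K'.Nonempty ∧ IsCompact K' ∧ IsConnected K' ∧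
      K' ⊆ Metric.closedBall (0 : EuclideanSpace ℝ (Fin n)) R ∧
      E ⊆ closedNbhd K' s ∧ μH[1] K' ≤ μH[1] K := by
  have hR₀ : 0 ≤ R := by linarith
  have hP := lipschitzWith_one_ballProj (F := EuclideanSpace ℝ (Fin n)) hR₀
  refine ⟨ballProj R '' K, hKconn.nonempty.image _, hKc.image hP.continuous,
    hKconn.image _ hP.continuous.continuousOn, ?_, fun x hx => ?_, ?_⟩
  · rintro _ ⟨y, -, rfl⟩
    exact mem_closedBall_zero_iff.2 (norm_ballProj_le hR₀ y)
  · have hxR : ‖x‖ ≤ R := by linarith [mem_closedBall_zero_iff.1 (hER hx)]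
    exact (infDist_image_le_of_lipschitzWith_one hP (ballProj_of_norm_le hxR) K).trans (hKcov hx)
  · simpa using hP.hausdorffMeasure_image_le zero_le_one K

/-- Any compact connected `K` whose `s`-neighborhood covers `E ⊆ B(0, R - 2s)` can be
replaced by one contained in `B(0, R)` without increasing the `H¹` measure. -/
theorem exists_competitor_in_ball {n : ℕ} (hn : 1 ≤ n)
    (s R : ℝ) (hs : 0 < s) (hR : 2 * s < R)
    (E : Set (EuclideanSpace ℝ (Fin n))) (hEc : IsCompact E)
    (hER : E ⊆ Metric.closedBall (0 : EuclideanSpace ℝ (Fin n)) (R - 2 * s))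
    (K : Set (EuclideanSpace ℝ (Fin n))) (hKne : K.Nonempty) (hKc : IsCompact K)
    (hKconn : IsConnected K) (hKcov : E ⊆ closedNbhd K s) :
    ∃ K' : Set (EuclideanSpace ℝ (Fin n)), K'.Nonempty ∧ IsCompact K' ∧ IsConnected K' ∧
      K' ⊆ Metric.closedBall (0 : EuclideanSpace ℝ (Fin n)) R ∧
      E ⊆ closedNbhd K' s ∧ μH[1] K' ≤ μH[1] K :=
  exists_competitor_in_ball_general s R hs hR E hER K hKc hKconn hKcov
end

section
/- Let L > 0, s > 0, and let n ≥ 1 be an integer. Set δ := (L/(2n))²/s and assume 2δ < s. Let I := [0, L] × {0} ⊆ ℝ² and define the finite set X := {(−δ, 0), (L + δ, 0)} ∪ {(kL/n, δ) : k = 0, …, n} ∪ {(kL/n, −δ) : k = 0, …, n}. Then B(I, s) ⊆ B(X, s). Moreover, the set Γ := ([−δ, L + δ] × {0}) ∪ ⋃_{k=0}^{n} ({kL/n} × [−δ, δ]) is compact, connected, contains X, and satisfies H¹(Γ) = L + (2n + 4)δ. -/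
/-!
A point within `s` of `I = [0, L] × {0}` has height `|y| ≤ s`. Beyond the ends of `I` it is at
least as close to `(-δ, 0)` or `(L + δ, 0)` as to `I`. Otherwise its abscissa lies within
`max (δ / 2) (L / (2n))` of a grid point `kL/n`, and the centre `(kL/n, ±δ)` on its side is at
squared distance at most `δ s + (|y| - δ)² ≤ s²`, because `δ s = (L / (2n))²` and `2δ < s`.

`Γ` is the segment `[-δ, L + δ] × {0}` with `n + 1` vertical prongs of length `2δ`, each meeting
the segment in a single point, so it is connected and `H¹(Γ) = (L + 2δ) + (n + 1) · 2δ`.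
-/

open MeasureTheory Set Metric Filter ENNReal

notation "ℝ²" => EuclideanSpace ℝ (Fin 2)

section closedNbhd

variable {n : ℕ} {A : Set (EuclideanSpace ℝ (Fin n))} {s : ℝ} {x : EuclideanSpace ℝ (Fin n)}

lemma mem_closedNbhd_of_dist_le {q : EuclideanSpace ℝ (Fin n)} (hq : q ∈ A) (h : dist x q ≤ s) :
    x ∈ closedNbhd A s :=
  (infDist_le_dist_of_mem hq).trans h

lemma exists_dist_le_of_mem_closedNbhd (hA : IsCompact A) (hne : A.Nonempty)
    (hx : x ∈ closedNbhd A s) : ∃ p ∈ A, dist x p ≤ s := by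
  obtain ⟨p, hp, hdist⟩ := hA.exists_infDist_eq_dist hne x
  exact ⟨p, hp, hdist ▸ hx⟩

end closedNbhd

lemma dist_sq_eq_fin_two (p q : ℝ²) : dist p q ^ 2 = (p 0 - q 0) ^ 2 + (p 1 - q 1) ^ 2 := by
  simp [EuclideanSpace.dist_sq_eq, Fin.sum_univ_two, Real.dist_eq, sq_abs]

lemma dist_le_iff_sq_le {p q : ℝ²} {s : ℝ} (hs : 0 ≤ s) :
    dist p q ≤ s ↔ (p 0 - q 0) ^ 2 + (p 1 - q 1) ^ 2 ≤ s ^ 2 := by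
  rw [← sq_le_sq₀ dist_nonneg hs, dist_sq_eq_fin_two]

lemma ext_fin_two {p q : ℝ²} (h0 : p 0 = q 0) (h1 : p 1 = q 1) : p = q := by
  ext i; fin_cases i <;> assumption

lemma Isometry.hausdorffMeasure_image_Icc {X : Type*} [MetricSpace X] [MeasurableSpace X]
    [BorelSpace X] {f : ℝ → X} (hf : Isometry f) (a b : ℝ) :
    μH[1] (f '' Icc a b) = ENNReal.ofReal (b - a) := by
  rw [hf.hausdorffMeasure_image (Or.inl zero_le_one), hausdorffMeasure_real, Real.volume_Icc]

def horizontalSegment (a b c : ℝ) : Set ℝ² := {p | p 0 ∈ Icc a b ∧ p 1 = c}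

def verticalSegment (c a b : ℝ) : Set ℝ² := {p | p 0 = c ∧ p 1 ∈ Icc a b}

lemma isometry_horizontal (c : ℝ) : Isometry fun t : ℝ => !₂[t, c] :=
  Isometry.of_dist_eq fun a b => by
    rw [← sq_eq_sq₀ dist_nonneg dist_nonneg, dist_sq_eq_fin_two, Real.dist_eq, sq_abs]
    simp

lemma isometry_vertical (c : ℝ) : Isometry fun t : ℝ => !₂[c, t] :=
  Isometry.of_dist_eq fun a b => by
    rw [← sq_eq_sq₀ dist_nonneg dist_nonneg, dist_sq_eq_fin_two, Real.dist_eq, sq_abs]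
    simp

lemma horizontalSegment_eq_image (a b c : ℝ) :
    horizontalSegment a b c = (fun t : ℝ => !₂[t, c]) '' Icc a b := by
  ext p
  constructor
  · rintro ⟨h0, h1⟩
    exact ⟨p 0, h0, ext_fin_two rfl h1.symm⟩
  · rintro ⟨t, ht, rfl⟩
    exact ⟨ht, rfl⟩

lemma verticalSegment_eq_image (c a b : ℝ) :
    verticalSegment c a b = (fun t : ℝ => !₂[c, t]) '' Icc a b := by
  ext p
  constructor
  · rintro ⟨h0, h1⟩
    exact ⟨p 1, h1, ext_fin_two h0.symm rfl⟩
  · rintro ⟨t, ht, rfl⟩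
    exact ⟨rfl, ht⟩

lemma isCompact_horizontalSegment (a b c : ℝ) : IsCompact (horizontalSegment a b c) :=
  horizontalSegment_eq_image a b c ▸ isCompact_Icc.image (isometry_horizontal c).continuous

lemma isCompact_verticalSegment (c a b : ℝ) : IsCompact (verticalSegment c a b) :=
  verticalSegment_eq_image c a b ▸ isCompact_Icc.image (isometry_vertical c).continuous

lemma isConnected_horizontalSegment {a b : ℝ} (hab : a ≤ b) (c : ℝ) :
    IsConnected (horizontalSegment a b c) :=
  horizontalSegment_eq_image a b c ▸
    (isConnected_Icc hab).image _ (isometry_horizontal c).continuous.continuousOn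

lemma isPreconnected_verticalSegment (c a b : ℝ) : IsPreconnected (verticalSegment c a b) :=
  verticalSegment_eq_image c a b ▸
    isPreconnected_Icc.image _ (isometry_vertical c).continuous.continuousOn

lemma hausdorffMeasure_horizontalSegment (a b c : ℝ) :
    μH[1] (horizontalSegment a b c) = ENNReal.ofReal (b - a) :=
  horizontalSegment_eq_image a b c ▸ (isometry_horizontal c).hausdorffMeasure_image_Icc a b

lemma hausdorffMeasure_verticalSegment (c a b : ℝ) :
    μH[1] (verticalSegment c a b) = ENNReal.ofReal (b - a) :=
  verticalSegment_eq_image c a b ▸ (isometry_vertical c).hausdorffMeasure_image_Icc a b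

lemma horizontalSegment_inter_verticalSegment_subsingleton (a b c c' a' b' : ℝ) :
    (horizontalSegment a b c ∩ verticalSegment c' a' b').Subsingleton := by
  rintro p ⟨⟨-, hp1⟩, hp0, -⟩ q ⟨⟨-, hq1⟩, hq0, -⟩
  exact ext_fin_two (hp0.trans hq0.symm) (hp1.trans hq1.symm)

lemma disjoint_verticalSegment {c c' : ℝ} (h : c ≠ c') (a b a' b' : ℝ) :
    Disjoint (verticalSegment c a b) (verticalSegment c' a' b') :=
  disjoint_left.2 fun _ ⟨hp, _⟩ ⟨hp', _⟩ => h (hp.symm.trans hp')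

lemma IsConnected.union_iUnion {X ι : Type*} [TopologicalSpace X] {S : Set X} {P : ι → Set X}
    (hS : IsConnected S) (hP : ∀ k, IsPreconnected (P k)) (hSP : ∀ k, (S ∩ P k).Nonempty) :
    IsConnected (S ∪ ⋃ k, P k) := by
  refine ⟨hS.nonempty.mono subset_union_left, ?_⟩
  obtain ⟨x, hx⟩ := hS.nonempty
  rcases isEmpty_or_nonempty ι with hι | hι
  · simpa using hS.isPreconnected
  rw [Set.union_iUnion]
  exact isPreconnected_iUnion ⟨x, mem_iInter.2 fun _ => Or.inl hx⟩
    fun k => hS.isPreconnected.union' (hSP k) (hP k)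

lemma measure_union_iUnion {X ι : Type*} [MeasurableSpace X] [Countable ι] (μ : Measure X)
    {S : Set X} {P : ι → Set X} (hP : ∀ k, MeasurableSet (P k))
    (hdisj : Pairwise (Function.onFun Disjoint P)) (hSP : ∀ k, μ (S ∩ P k) = 0) :
    μ (S ∪ ⋃ k, P k) = μ S + ∑' k, μ (P k) := by
  have hnull : μ (S ∩ ⋃ k, P k) = 0 := by
    rw [inter_iUnion]
    exact measure_iUnion_null hSP
  rw [measure_union₀ (MeasurableSet.iUnion hP).nullMeasurableSet hnull, measure_iUnion hdisj hP]

lemma exists_nat_abs_sub_le_half {t : ℝ} {n : ℕ} (h0 : 0 ≤ t) (hn : t ≤ n) :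
    ∃ k ≤ n, |t - k| ≤ 1 / 2 := by
  refine ⟨⌊t + 1 / 2⌋₊, ?_, ?_⟩
  · exact Nat.le_of_lt_succ <| (Nat.floor_lt (by positivity)).2 (by push_cast; linarith)
  · have h₁ : (⌊t + 1 / 2⌋₊ : ℝ) ≤ t + 1 / 2 := Nat.floor_le (by positivity)
    have h₂ : t + 1 / 2 < ⌊t + 1 / 2⌋₊ + 1 := Nat.lt_floor_add_one _
    rw [abs_le]
    constructor <;> linarith

lemma exists_sq_sub_grid_le {L ε a : ℝ} {n : ℕ} (hL : 0 < L) (hn : 0 < n)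
    (ha : a ∈ Icc (-ε) (L + ε)) :
    ∃ k ≤ n, (a - k * L / n) ^ 2 ≤ max (ε ^ 2) ((L / (2 * n)) ^ 2) := by
  have hn' : (0 : ℝ) < n := by exact_mod_cast hn
  rcases le_or_gt a 0 with ha0 | ha0
  · refine ⟨0, n.zero_le, le_max_of_le_left ?_⟩
    simp only [CharP.cast_eq_zero, zero_mul, zero_div, sub_zero]
    nlinarith [ha.1]
  rcases le_or_gt L a with haL | haL
  · refine ⟨n, le_rfl, le_max_of_le_left ?_⟩
    rw [mul_div_cancel_left₀ L hn'.ne']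
    nlinarith [ha.2]
  obtain ⟨k, hk, hround⟩ := exists_nat_abs_sub_le_half (t := a * n / L) (by positivity)
    (by rw [div_le_iff₀ hL]; nlinarith)
  refine ⟨k, hk, le_max_of_le_right ?_⟩
  have hscale : a - k * L / n = (a * n / L - k) * (L / n) := by field_simp
  calc (a - k * L / n) ^ 2 = |a * n / L - k| ^ 2 * (L / n) ^ 2 := by rw [hscale, mul_pow, sq_abs]
  _ ≤ (1 / 2) ^ 2 * (L / n) ^ 2 := by gcongr
  _ = (L / (2 * n)) ^ 2 := by ring

lemma add_sq_sub_le_sq {u b δ s : ℝ} (hδ : 0 ≤ δ) (hδs : 2 * δ ≤ s) (hu : u ≤ δ * s)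
    (hb : b ∈ Icc 0 s) : u + (b - δ) ^ 2 ≤ s ^ 2 := by
  nlinarith [mul_nonneg hb.1 (sub_nonneg.2 hb.2), mul_nonneg (sub_nonneg.2 hb.2) (by linarith : 0 ≤ s - 2 * δ),
    mul_nonneg hδ (by linarith : 0 ≤ s - δ)]

def prongCenters (L δ : ℝ) (n : ℕ) : Set ℝ² :=
  ({!₂[-δ, 0], !₂[L + δ, 0]} : Set ℝ²) ∪
    ⋃ k : Fin (n + 1), ({!₂[((k : ℕ) : ℝ) * L / n, δ], !₂[((k : ℕ) : ℝ) * L / n, -δ]} : Set ℝ²)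

def segmentWithProngs (L δ : ℝ) (n : ℕ) : Set ℝ² :=
  horizontalSegment (-δ) (L + δ) 0 ∪ ⋃ k : Fin (n + 1), verticalSegment (((k : ℕ) : ℝ) * L / n) (-δ) δ

section prongs

variable {L δ : ℝ} {n : ℕ}

lemma grid_mem_Icc (hL : 0 ≤ L) (k : Fin (n + 1)) : ((k : ℕ) : ℝ) * L / n ∈ Icc 0 L := by
  rcases n.eq_zero_or_pos with rfl | hn
  · simpa using hL
  have hn' : (0 : ℝ) < n := by exact_mod_cast hn
  have hk : ((k : ℕ) : ℝ) ≤ n := by exact_mod_cast k.is_le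
  refine ⟨by positivity, ?_⟩
  rw [div_le_iff₀ hn']
  nlinarith

lemma grid_injective (hL : L ≠ 0) (hn : 0 < n) :
    Function.Injective fun k : Fin (n + 1) => ((k : ℕ) : ℝ) * L / n := by
  intro j k h
  have hn' : (n : ℝ) ≠ 0 := by exact_mod_cast hn.ne'
  simp only [div_left_inj' hn', mul_left_inj' hL, Nat.cast_inj] at h
  exact Fin.ext h

lemma exists_mem_prongCenters_dist_le (hL : 0 < L) (hn : 0 < n) (hδ : 0 ≤ δ) {s : ℝ}
    (hδs : 2 * δ ≤ s) (hgrid : (L / (2 * n)) ^ 2 ≤ δ * s) {x p : ℝ²}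
    (hp : p ∈ horizontalSegment 0 L 0) (hxp : dist x p ≤ s) :
    ∃ q ∈ prongCenters L δ n, dist x q ≤ s := by
  have hs : 0 ≤ s := by linarith
  obtain ⟨⟨hc0, hcL⟩, hp1⟩ := hp
  rw [dist_le_iff_sq_le hs, hp1, sub_zero] at hxp
  set a := x 0
  set b := x 1
  set c := p 0
  suffices h : ∃ u v : ℝ, !₂[u, v] ∈ prongCenters L δ n ∧ (a - u) ^ 2 + (b - v) ^ 2 ≤ s ^ 2 by
    obtain ⟨u, v, hq, huv⟩ := h
    exact ⟨_, hq, (dist_le_iff_sq_le hs).2 huv⟩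
  rcases le_or_gt a (-(δ / 2)) with hleft | hleft
  · refine ⟨-δ, 0, Or.inl (mem_insert _ _), ?_⟩
    nlinarith [mul_nonneg (by linarith : 0 ≤ c + δ) (by linarith : 0 ≤ c - δ - 2 * a)]
  rcases le_or_gt (L + δ / 2) a with hright | hright
  · refine ⟨L + δ, 0, Or.inl (mem_insert_of_mem _ rfl), ?_⟩
    nlinarith [mul_nonneg (by linarith : 0 ≤ L + δ - c) (by linarith : 0 ≤ 2 * a - c - L - δ)]
  obtain ⟨k, hk, hak⟩ := exists_sq_sub_grid_le hL hn (ε := δ / 2) ⟨hleft.le, hright.le⟩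
  have hak' : (a - k * L / n) ^ 2 ≤ δ * s := hak.trans (max_le (by nlinarith) hgrid)
  have hb : |b| ≤ s := abs_le_of_sq_le_sq (by nlinarith) hs
  have hmem : ∀ v, v = δ ∨ v = -δ → !₂[(k : ℝ) * L / n, v] ∈ prongCenters L δ n := by
    rintro v (rfl | rfl)
    exacts [Or.inr (mem_iUnion.2 ⟨⟨k, by omega⟩, mem_insert _ _⟩),
      Or.inr (mem_iUnion.2 ⟨⟨k, by omega⟩, mem_insert_of_mem _ rfl⟩)]
  rcases le_or_gt 0 b with hb0 | hb0
  · exact ⟨_, δ, hmem δ (Or.inl rfl), add_sq_sub_le_sq hδ hδs hak' ⟨hb0, (le_abs_self b).trans hb⟩⟩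
  · refine ⟨_, -δ, hmem (-δ) (Or.inr rfl), ?_⟩
    rw [show b - -δ = -(-b - δ) by ring, neg_sq]
    exact add_sq_sub_le_sq hδ hδs hak' ⟨by linarith, (neg_le_abs b).trans hb⟩

lemma closedNbhd_subset_prongCenters (hL : 0 < L) (hn : 0 < n) (hδ : 0 ≤ δ) {s : ℝ}
    (hδs : 2 * δ ≤ s) (hgrid : (L / (2 * n)) ^ 2 ≤ δ * s) :
    closedNbhd (horizontalSegment 0 L 0) s ⊆ closedNbhd (prongCenters L δ n) s := by
  intro x hx
  obtain ⟨p, hp, hxp⟩ := exists_dist_le_of_mem_closedNbhd (isCompact_horizontalSegment 0 L 0)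
    ⟨!₂[0, 0], ⟨left_mem_Icc.2 hL.le, rfl⟩⟩ hx
  obtain ⟨q, hq, hxq⟩ := exists_mem_prongCenters_dist_le hL hn hδ hδs hgrid hp hxp
  exact mem_closedNbhd_of_dist_le hq hxq

lemma isCompact_segmentWithProngs : IsCompact (segmentWithProngs L δ n) :=
  (isCompact_horizontalSegment _ _ _).union (isCompact_iUnion fun _ => isCompact_verticalSegment _ _ _)

lemma isConnected_segmentWithProngs (hL : 0 ≤ L) (hδ : 0 ≤ δ) :
    IsConnected (segmentWithProngs L δ n) := by
  refine (isConnected_horizontalSegment (by linarith) 0).union_iUnion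
    (fun _ => isPreconnected_verticalSegment _ _ _) fun k => ?_
  have hk := grid_mem_Icc hL k
  exact ⟨!₂[(k : ℕ) * L / n, 0],
    ⟨⟨(neg_nonpos.2 hδ).trans hk.1, hk.2.trans (le_add_of_nonneg_right hδ)⟩, rfl⟩,
    rfl, neg_nonpos.2 hδ, hδ⟩

lemma prongCenters_subset_segmentWithProngs (hL : 0 ≤ L) (hδ : 0 ≤ δ) :
    prongCenters L δ n ⊆ segmentWithProngs L δ n := by
  rintro p ((rfl | rfl) | hp)
  · exact Or.inl ⟨⟨le_rfl, by simp; linarith⟩, rfl⟩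
  · exact Or.inl ⟨⟨by simp; linarith, le_rfl⟩, rfl⟩
  obtain ⟨k, rfl | rfl⟩ := mem_iUnion.1 hp
  · exact Or.inr (mem_iUnion.2 ⟨k, rfl, by simp; linarith, le_rfl⟩)
  · exact Or.inr (mem_iUnion.2 ⟨k, rfl, le_rfl, by simp; linarith⟩)

lemma hausdorffMeasure_segmentWithProngs (hL : 0 < L) (hn : 0 < n) (hδ : 0 ≤ δ) :
    μH[1] (segmentWithProngs L δ n) = ENNReal.ofReal (L + (2 * n + 4) * δ) := by
  have := Measure.nullSingletonClass_hausdorff ℝ² one_pos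
  rw [segmentWithProngs, measure_union_iUnion _
      (fun _ => (isCompact_verticalSegment _ _ _).isClosed.measurableSet)
      (fun _ _ hjk => disjoint_verticalSegment ((grid_injective hL.ne' hn).ne hjk) _ _ _ _)
      (fun _ => (horizontalSegment_inter_verticalSegment_subsingleton _ _ _ _ _ _).measure_zero _),
    hausdorffMeasure_horizontalSegment]
  simp only [hausdorffMeasure_verticalSegment, tsum_fintype, Finset.sum_const, Finset.card_univ,
    Fintype.card_fin, nsmul_eq_mul]
  rw [← ENNReal.ofReal_natCast, ← ENNReal.ofReal_mul (by positivity),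
    ← ENNReal.ofReal_add (by linarith) (mul_nonneg (by positivity) (by linarith))]
  congr 1
  push_cast
  ring

end prongs

/-- The explicit prong construction covering the `s`-neighborhood of a horizontal
segment of length `L`: the `s`-balls at the displaced points cover `B(I, s)`, and
the segment together with its prongs is a compact connected set of
`H¹`-measure `L + (2n + 4)δ` containing the displaced points. -/
theorem segment_prong_construction
    (L s : ℝ) (hL : 0 < L) (hs : 0 < s) (n : ℕ) (hn : 1 ≤ n)
    (δ : ℝ) (hδ : δ = (L / (2 * n)) ^ 2 / s) (hδs : 2 * δ < s)
    (I : Set (EuclideanSpace ℝ (Fin 2)))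
    (hI : I = {p : EuclideanSpace ℝ (Fin 2) | p 0 ∈ Set.Icc 0 L ∧ p 1 = 0})
    (X : Set (EuclideanSpace ℝ (Fin 2)))
    (hX : X = ({!₂[-δ, 0], !₂[L + δ, 0]} : Set (EuclideanSpace ℝ (Fin 2))) ∪
      (⋃ k : Fin (n + 1),
        ({!₂[((k : ℕ) : ℝ) * L / n, δ], !₂[((k : ℕ) : ℝ) * L / n, -δ]} :
          Set (EuclideanSpace ℝ (Fin 2)))))
    (Γ : Set (EuclideanSpace ℝ (Fin 2)))
    (hΓ : Γ = {p : EuclideanSpace ℝ (Fin 2) | p 0 ∈ Set.Icc (-δ) (L + δ) ∧ p 1 = 0} ∪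
      (⋃ k : Fin (n + 1),
        {p : EuclideanSpace ℝ (Fin 2) |
          p 0 = ((k : ℕ) : ℝ) * L / n ∧ p 1 ∈ Set.Icc (-δ) δ})) :
    closedNbhd I s ⊆ closedNbhd X s ∧
    IsCompact Γ ∧ IsConnected Γ ∧ X ⊆ Γ ∧
    μH[1] Γ = ENNReal.ofReal (L + (2 * n + 4) * δ) := by
  have hδ0 : 0 ≤ δ := by rw [hδ]; positivity
  have hgrid : (L / (2 * n)) ^ 2 = δ * s := by rw [hδ, div_mul_cancel₀ _ hs.ne']
  change I = horizontalSegment 0 L 0 at hI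
  change X = prongCenters L δ n at hX
  change Γ = segmentWithProngs L δ n at hΓ
  subst hI hX hΓ
  exact ⟨closedNbhd_subset_prongCenters hL hn hδ0 hδs.le hgrid.le, isCompact_segmentWithProngs,
    isConnected_segmentWithProngs hL.le hδ0, prongCenters_subset_segmentWithProngs hL.le hδ0,
    hausdorffMeasure_segmentWithProngs hL hn hδ0⟩
end

section
/- Let s > 0, let ν < τ be reals, set ρ := τ − ν, let μ ≥ 0, let n ≥ 1 be an integer, and set δ := (ρ/(2n))²/s. Assume μ + 2δ < s and μ² ≤ 4δ(2s − δ). Let R := [ν, τ] × [−μ/2, μ/2] ⊆ ℝ² and define the finite set X := {(ν − δ, μ/2), (ν − δ, −μ/2), (τ + δ, μ/2), (τ + δ, −μ/2)} ∪ {(ν + kρ/n, δ + μ/2) : k = 0, …, n} ∪ {(ν + kρ/n, −(δ + μ/2)) : k = 0, …, n}. Then B(R, s) ⊆ B(X, s). -/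
/-!
Let `(c, d) ∈ R` be a point nearest to `x = (a, b)`. Since `R` and `X` are symmetric under
`b ↦ -b`, we may assume `b ≥ 0` and use only the centres in the upper half-plane.
If `ν ≤ a ≤ τ`, the grid prong at horizontal distance at most `ρ/(2n)` from `x` works: the
horizontal offset contributes at most `(ρ/(2n))² = δs`, and since `μ + 2δ < s` the vertical offset
to the prong's height `δ + μ/2` is at most `max (s - δ) (s/2) ≤ √(s² - δs)`.
If `x` lies beyond an end of `R`, at horizontal distance `u`, and `b ≤ μ/2`, the corner centre
pushed out by `δ` works because `(s - δ)² + (μ/2)² ≤ s²` is exactly `μ² ≤ 4δ(2s - δ)`. If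
`b > μ/2`, pushing the corner centre out by `δ` or lifting the end prong by `δ` moves it towards
`x` whenever the corresponding offset is at least `δ/2`; if both are smaller, `x` is within
`δ√5/2 < s` of the corner centre.
-/

open MeasureTheory Set Metric Filter ENNReal

lemma exists_nat_le_abs_sub_grid_le {ν τ a : ℝ} {n : ℕ} (hn : n ≠ 0) (hντ : ν < τ)
    (ha : a ∈ Icc ν τ) : ∃ k ≤ n, |a - (ν + k * (τ - ν) / n)| ≤ (τ - ν) / (2 * n) := by
  have hρ : 0 < τ - ν := sub_pos.2 hντ
  set t := (a - ν) * n / (τ - ν)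
  have ht0 : 0 ≤ t + 1 / 2 := by have := ha.1; positivity
  have htn : t ≤ n := by
    rw [div_le_iff₀ hρ]; nlinarith [ha.2]
  refine ⟨⌊t + 1 / 2⌋₊, Nat.lt_add_one_iff.1 ((Nat.floor_lt ht0).2 (by push_cast; linarith)), ?_⟩
  have hfloor_le := Nat.floor_le ht0
  have hlt_floor := Nat.lt_floor_add_one (t + 1 / 2)
  have hsub : a - (ν + ⌊t + 1 / 2⌋₊ * (τ - ν) / n) = (t - ⌊t + 1 / 2⌋₊) * ((τ - ν) / n) := by
    simp only [t]; field_simp; ring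
  calc |a - (ν + ⌊t + 1 / 2⌋₊ * (τ - ν) / n)| = |t - ⌊t + 1 / 2⌋₊| * ((τ - ν) / n) := by
        rw [hsub, abs_mul, abs_of_pos (a := (τ - ν) / n) (div_pos hρ (by positivity))]
    _ ≤ 1 / 2 * ((τ - ν) / n) := by gcongr; exact abs_le.2 ⟨by linarith, by linarith⟩
    _ = (τ - ν) / (2 * n) := by ring

/-- Coordinates are relative to an end of the rectangle: `u` is how far the point lies beyond that
end, `b ≥ 0` its height and `d` the height of a nearest point of the rectangle. The two alternatives
are the corner centre pushed outwards by `δ` and the end prong lifted by `δ`. -/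
lemma corner_or_end_prong_sq_le {s μ δ u b d : ℝ} (hδ : 0 ≤ δ) (hδs : 2 * δ < s)
    (hμ : μ ^ 2 ≤ 4 * δ * (2 * s - δ)) (hu : 0 ≤ u) (hb : 0 ≤ b) (hd : d ≤ μ / 2)
    (h : u ^ 2 + (b - d) ^ 2 ≤ s ^ 2) :
    (u - δ) ^ 2 + (b - μ / 2) ^ 2 ≤ s ^ 2 ∨ u ^ 2 + (b - (δ + μ / 2)) ^ 2 ≤ s ^ 2 := by
  rcases le_total b (μ / 2) with hbμ | hbμ
  · left
    have hus : u ≤ s := by nlinarith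
    nlinarith
  · have hw : (b - μ / 2) ^ 2 ≤ (b - d) ^ 2 := by nlinarith
    rcases le_total (δ / 2) u with hu' | hu'
    · left; nlinarith
    rcases le_total (δ / 2) (b - μ / 2) with hw' | hw'
    · right; nlinarith
    · left; nlinarith

lemma grid_prong_sq_le {s μ δ e b d : ℝ} (hμ : 0 ≤ μ) (hδ : 0 ≤ δ) (h1 : μ + 2 * δ < s)
    (he : e ^ 2 ≤ δ * s) (hb : 0 ≤ b) (hd : d ≤ μ / 2) (h : (b - d) ^ 2 ≤ s ^ 2) :
    e ^ 2 + (b - (δ + μ / 2)) ^ 2 ≤ s ^ 2 := by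
  have hbs : b - d ≤ s := abs_le_of_sq_le_sq' h (by linarith) |>.2
  rcases le_total b (δ + μ / 2) with h' | h'
  · nlinarith
  · nlinarith

def upperCentres (ν τ μ δ : ℝ) (n : ℕ) : Set (ℝ × ℝ) :=
  {(ν - δ, μ / 2), (τ + δ, μ / 2)} ∪
    range fun k : Fin (n + 1) => (ν + (k : ℕ) * (τ - ν) / n, δ + μ / 2)

lemma exists_mem_upperCentres_sq_le {s ν τ μ δ a b c d : ℝ} {n : ℕ} (hn : n ≠ 0) (hντ : ν < τ)
    (hμ : 0 ≤ μ) (hδ : δ * s = ((τ - ν) / (2 * n)) ^ 2) (hδ0 : 0 ≤ δ) (h1 : μ + 2 * δ < s)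
    (h2 : μ ^ 2 ≤ 4 * δ * (2 * s - δ)) (hb : 0 ≤ b) (hc : c ∈ Icc ν τ) (hd : d ≤ μ / 2)
    (h : (a - c) ^ 2 + (b - d) ^ 2 ≤ s ^ 2) :
    ∃ p q, (p, q) ∈ upperCentres ν τ μ δ n ∧ (a - p) ^ 2 + (b - q) ^ 2 ≤ s ^ 2 := by
  have h2δ : 2 * δ < s := by linarith
  rcases le_or_gt a ν with haν | hνa
  · have hu : (ν - a) ^ 2 + (b - d) ^ 2 ≤ s ^ 2 := by nlinarith [hc.1]
    rcases corner_or_end_prong_sq_le hδ0 h2δ h2 (sub_nonneg.2 haν) hb hd hu with h' | h'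
    · exact ⟨ν - δ, μ / 2, by simp [upperCentres], by linarith [h']⟩
    · exact ⟨ν, δ + μ / 2, Or.inr ⟨0, by simp⟩, by linarith [h']⟩
  rcases le_or_gt τ a with hτa | haτ
  · have hu : (a - τ) ^ 2 + (b - d) ^ 2 ≤ s ^ 2 := by nlinarith [hc.2]
    rcases corner_or_end_prong_sq_le hδ0 h2δ h2 (sub_nonneg.2 hτa) hb hd hu with h' | h'
    · exact ⟨τ + δ, μ / 2, by simp [upperCentres], by linarith [h']⟩
    · have hτ : ν + (n : ℝ) * (τ - ν) / n = τ := by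
        rw [mul_div_cancel_left₀ _ (Nat.cast_ne_zero.2 hn)]; ring
      exact ⟨τ, δ + μ / 2, Or.inr ⟨Fin.last n, Prod.ext hτ rfl⟩, h'⟩
  obtain ⟨k, hkn, hk⟩ := exists_nat_le_abs_sub_grid_le hn hντ ⟨hνa.le, haτ.le⟩
  refine ⟨_, _, Or.inr ⟨⟨k, Nat.lt_succ_of_le hkn⟩, rfl⟩, grid_prong_sq_le hμ hδ0 h1 ?_ hb hd ?_⟩
  · rw [hδ, ← sq_abs]; exact pow_le_pow_left₀ (abs_nonneg _) hk 2
  · nlinarith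

lemma dist_le_iff_sq_add_sq_le {x y : EuclideanSpace ℝ (Fin 2)} {s : ℝ} (hs : 0 ≤ s) :
    dist x y ≤ s ↔ (x 0 - y 0) ^ 2 + (x 1 - y 1) ^ 2 ≤ s ^ 2 := by
  rw [EuclideanSpace.dist_eq, Real.sqrt_le_left hs, Fin.sum_univ_two, Real.dist_eq, Real.dist_eq,
    sq_abs, sq_abs]

lemma exists_sq_add_sq_le_of_mem_closedNbhd_rect {a₁ b₁ a₂ b₂ s : ℝ}
    {x : EuclideanSpace ℝ (Fin 2)} (h₁ : a₁ ≤ b₁) (h₂ : a₂ ≤ b₂) (hs : 0 ≤ s)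
    (hx : x ∈ closedNbhd {p | p 0 ∈ Icc a₁ b₁ ∧ p 1 ∈ Icc a₂ b₂} s) :
    ∃ c ∈ Icc a₁ b₁, ∃ d ∈ Icc a₂ b₂, (x 0 - c) ^ 2 + (x 1 - d) ^ 2 ≤ s ^ 2 := by
  have hR : IsClosed {p : EuclideanSpace ℝ (Fin 2) | p 0 ∈ Icc a₁ b₁ ∧ p 1 ∈ Icc a₂ b₂} :=
    (isClosed_Icc.preimage (by fun_prop)).inter (isClosed_Icc.preimage (by fun_prop))
  obtain ⟨y, hy, hxy⟩ := hR.exists_infDist_eq_dist ⟨!₂[a₁, a₂], by simp [h₁, h₂]⟩ x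
  exact ⟨y 0, hy.1, y 1, hy.2, (dist_le_iff_sq_add_sq_le hs).1 (hxy ▸ hx)⟩

lemma mk_mem_closedNbhd_of_sq_add_sq_le {X : Set (EuclideanSpace ℝ (Fin 2))}
    {x : EuclideanSpace ℝ (Fin 2)} {p q s : ℝ} (hs : 0 ≤ s) (hX : !₂[p, q] ∈ X)
    (h : (x 0 - p) ^ 2 + (x 1 - q) ^ 2 ≤ s ^ 2) : x ∈ closedNbhd X s :=
  (infDist_le_dist_of_mem hX).trans ((dist_le_iff_sq_add_sq_le hs).2 (by simpa using h))

/-- The prong construction for a thin rectangle: the `s`-balls centered at the finitely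
many displaced points cover the `s`-neighborhood of the rectangle
`R = [ν, τ] × [−μ/2, μ/2]`. -/
theorem rectangle_prong_cover
    (s ν τ μ : ℝ) (hs : 0 < s) (hντ : ν < τ) (hμ : 0 ≤ μ)
    (ρ : ℝ) (hρ : ρ = τ - ν) (n : ℕ) (hn : 1 ≤ n)
    (δ : ℝ) (hδ : δ = (ρ / (2 * n)) ^ 2 / s)
    (h1 : μ + 2 * δ < s) (h2 : μ ^ 2 ≤ 4 * δ * (2 * s - δ))
    (R : Set (EuclideanSpace ℝ (Fin 2)))
    (hR : R = {p : EuclideanSpace ℝ (Fin 2) |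
      p 0 ∈ Set.Icc ν τ ∧ p 1 ∈ Set.Icc (-(μ / 2)) (μ / 2)})
    (X : Set (EuclideanSpace ℝ (Fin 2)))
    (hX : X = ({!₂[ν - δ, μ / 2], !₂[ν - δ, -(μ / 2)], !₂[τ + δ, μ / 2], !₂[τ + δ, -(μ / 2)]} :
        Set (EuclideanSpace ℝ (Fin 2))) ∪
      (⋃ k : Fin (n + 1),
        ({!₂[ν + ((k : ℕ) : ℝ) * ρ / n, δ + μ / 2],
          !₂[ν + ((k : ℕ) : ℝ) * ρ / n, -(δ + μ / 2)]} :
          Set (EuclideanSpace ℝ (Fin 2))))) :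
    closedNbhd R s ⊆ closedNbhd X s := by
  subst hρ hR
  have hδ0 : 0 ≤ δ := hδ ▸ by positivity
  have hδs : δ * s = ((τ - ν) / (2 * n)) ^ 2 := by rw [hδ]; field_simp
  intro x hx
  obtain ⟨c, hc, d, hd, hxcd⟩ :=
    exists_sq_add_sq_le_of_mem_closedNbhd_rect hντ.le (by linarith) hs.le hx
  have hfold : (x 0 - c) ^ 2 + (|x 1| - |d|) ^ 2 ≤ s ^ 2 := by
    nlinarith [sq_le_sq.2 (abs_abs_sub_abs_le_abs_sub (x 1) d)]
  obtain ⟨p, q, hpq, hle⟩ := exists_mem_upperCentres_sq_le (by omega) hντ hμ hδs hδ0 h1 h2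
    (abs_nonneg _) hc (abs_le.2 hd) hfold
  have hmem : !₂[p, q] ∈ X ∧ !₂[p, -q] ∈ X := by
    subst hX
    rcases hpq with (⟨rfl, rfl⟩ | ⟨rfl, rfl⟩) | ⟨k, ⟨rfl, rfl⟩⟩
    · exact ⟨.inl (.inl rfl), .inl (.inr (.inl rfl))⟩
    · exact ⟨.inl (.inr (.inr (.inl rfl))), .inl (.inr (.inr (.inr rfl)))⟩
    · exact ⟨.inr (mem_iUnion.2 ⟨k, .inl rfl⟩), .inr (mem_iUnion.2 ⟨k, .inr rfl⟩)⟩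
  rcases le_total 0 (x 1) with hb | hb
  · rw [abs_of_nonneg hb] at hle
    exact mk_mem_closedNbhd_of_sq_add_sq_le hs.le hmem.1 hle
  · rw [abs_of_nonpos hb] at hle
    exact mk_mem_closedNbhd_of_sq_add_sq_le hs.le hmem.2 (by linarith)
end

section
/- Let γ : [0, 1] → ℝ² be continuously differentiable with γ'(t) ≠ 0 for all t ∈ [0, 1]. Then for every α > 0 there exists M ∈ ℕ, M ≥ 1, such that for every integer 0 ≤ i < M: γ(i/M) ≠ γ((i+1)/M), and for every t ∈ [i/M, (i+1)/M], the distance from γ(t) to the closed segment [γ(i/M), γ((i+1)/M)] is at most α · ‖γ((i+1)/M) − γ(i/M)‖. -/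
/-!
On a short interval `[a, b]` the derivative of a regular `C¹` curve stays uniformly close to
`v = γ'(a)`, so `γ` is `ε (t - a)`-close to the affine map `t ↦ γ a + (t - a) v`. Hence the chord
has length at least `(b - a)(‖v‖ - ε)` and `γ` stays within `2 ε (b - a)` of it; since `‖γ'‖` is
bounded below by some `m > 0`, taking `ε` small relative to `α m` and a uniform partition finer than
the modulus of uniform continuity of `γ'` gives the claim on every piece.
-/

open MeasureTheory Set Metric Filter ENNReal

section NearLinear

variable {E : Type*} [NormedAddCommGroup E] [NormedSpace ℝ E]

theorem norm_sub_sub_smul_le_of_norm_deriv_sub_le {f f' : ℝ → E} {v : E} {a b ε : ℝ}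
    (hf : ∀ x ∈ Icc a b, HasDerivWithinAt f (f' x) (Icc a b) x)
    (hf' : ∀ x ∈ Icc a b, ‖f' x - v‖ ≤ ε) {y : ℝ} (hy : y ∈ Icc a b) :
    ‖f y - f a - (y - a) • v‖ ≤ ε * (y - a) := by
  have hg : ∀ x ∈ Icc a b, HasDerivWithinAt (fun u ↦ f u - u • v) (f' x - v) (Icc a b) x :=
    fun x hx ↦ (hf x hx).sub (by simpa using (hasDerivWithinAt_id x _).smul_const v)
  have := (convex_Icc a b).norm_image_sub_le_of_norm_hasDerivWithin_le hg hf'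
    (left_mem_Icc.2 (hy.1.trans hy.2)) hy
  rw [Real.norm_of_nonneg (sub_nonneg.2 hy.1)] at this
  convert this using 2
  rw [sub_smul]
  abel

theorem mul_sub_le_norm_of_norm_sub_smul_le {x v : E} {s ε : ℝ} (hs : 0 ≤ s)
    (h : ‖x - s • v‖ ≤ ε * s) : s * (‖v‖ - ε) ≤ ‖x‖ := by
  have := norm_sub_norm_le (s • v) (s • v - x)
  rw [_root_.sub_sub_cancel, norm_smul, Real.norm_of_nonneg hs, norm_sub_rev] at this
  linarith

theorem infDist_segment_le_of_norm_sub_sub_smul_le {f : ℝ → E} {v : E} {a b ε : ℝ}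
    (hab : a < b) (hε : 0 ≤ ε) (hf : ∀ y ∈ Icc a b, ‖f y - f a - (y - a) • v‖ ≤ ε * (y - a))
    {t : ℝ} (ht : t ∈ Icc a b) :
    infDist (f t) (segment ℝ (f a) (f b)) ≤ 2 * ε * (b - a) := by
  set θ := (t - a) / (b - a)
  have hθ : θ ∈ Icc (0 : ℝ) 1 :=
    ⟨div_nonneg (by linarith [ht.1]) (by linarith), (div_le_one (by linarith)).2 (by linarith [ht.2])⟩
  have hmem : f a + θ • (f b - f a) ∈ segment ℝ (f a) (f b) := by
    rw [segment_eq_image']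
    exact ⟨θ, hθ, rfl⟩
  have hθba : θ * (b - a) = t - a := div_mul_cancel₀ _ (by linarith)
  -- `θ * (b - a) = t - a`, so both error terms are errors of the same affine approximation.
  have hsplit : f t - (f a + θ • (f b - f a)) =
      (f t - f a - (t - a) • v) - θ • (f b - f a - (b - a) • v) := by
    rw [← hθba, mul_smul]
    simp only [smul_sub]
    abel
  calc infDist (f t) (segment ℝ (f a) (f b))
      ≤ ‖f t - (f a + θ • (f b - f a))‖ := by
        rw [← dist_eq_norm]
        exact infDist_le_dist_of_mem hmem
    _ ≤ ε * (t - a) + θ * (ε * (b - a)) := by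
        rw [hsplit]
        refine (norm_sub_le _ _).trans (add_le_add (hf t ht) ?_)
        rw [norm_smul, Real.norm_of_nonneg hθ.1]
        exact mul_le_mul_of_nonneg_left (hf b (right_mem_Icc.2 hab.le)) hθ.1
    _ = 2 * ε * (t - a) := by rw [mul_left_comm, hθba]; ring
    _ ≤ 2 * ε * (b - a) := by gcongr; exact ht.2

theorem chord_ne_and_infDist_segment_le {f : ℝ → E} {v : E} {a b ε α : ℝ}
    (hab : a < b) (hε : 0 ≤ ε) (hεv : ε < ‖v‖) (hεα : 2 * ε ≤ α * (‖v‖ - ε))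
    (hf : ∀ y ∈ Icc a b, ‖f y - f a - (y - a) • v‖ ≤ ε * (y - a)) :
    f a ≠ f b ∧ ∀ t ∈ Icc a b,
      infDist (f t) (segment ℝ (f a) (f b)) ≤ α * ‖f b - f a‖ := by
  have hchord : (b - a) * (‖v‖ - ε) ≤ ‖f b - f a‖ :=
    mul_sub_le_norm_of_norm_sub_smul_le (by linarith) (hf b (right_mem_Icc.2 hab.le))
  have hα : 0 ≤ α := by
    by_contra! hα
    nlinarith
  refine ⟨fun h ↦ ?_, fun t ht ↦ ?_⟩
  · rw [h, sub_self, norm_zero] at hchord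
    nlinarith
  · calc infDist (f t) (segment ℝ (f a) (f b)) ≤ 2 * ε * (b - a) :=
          infDist_segment_le_of_norm_sub_sub_smul_le hab hε hf ht
      _ ≤ α * ((b - a) * (‖v‖ - ε)) := by nlinarith
      _ ≤ α * ‖f b - f a‖ := by gcongr

theorem ContDiffOn.exists_pos_forall_norm_sub_sub_smul_derivWithin_le {f : ℝ → E} {s t : ℝ}
    (hst : s < t) (hf : ContDiffOn ℝ 1 f (Icc s t)) {ε : ℝ} (hε : 0 < ε) :
    ∃ δ > 0, ∀ a b, s ≤ a → b ≤ t → b - a < δ → ∀ y ∈ Icc a b,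
      ‖f y - f a - (y - a) • derivWithin f (Icc s t) a‖ ≤ ε * (y - a) := by
  have hcont : ContinuousOn (derivWithin f (Icc s t)) (Icc s t) :=
    hf.continuousOn_derivWithin (uniqueDiffOn_Icc hst) le_rfl
  obtain ⟨δ, hδ, hclose⟩ := Metric.uniformContinuousOn_iff.1
    (isCompact_Icc.uniformContinuousOn_of_continuous hcont) ε hε
  refine ⟨δ, hδ, fun a b hsa hbt hba y hy ↦ ?_⟩
  have hsub : Icc a b ⊆ Icc s t := Icc_subset_Icc hsa hbt
  have ha : a ∈ Icc s t := hsub (left_mem_Icc.2 (hy.1.trans hy.2))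
  refine norm_sub_sub_smul_le_of_norm_deriv_sub_le
    (fun x hx ↦ ((hf.differentiableOn one_ne_zero x (hsub hx)).hasDerivWithinAt).mono hsub)
    (fun x hx ↦ ?_) hy
  rw [← dist_eq_norm]
  refine (hclose x (hsub hx) a ha ?_).le
  rw [Real.dist_eq, abs_of_nonneg (by linarith [hx.1])]
  linarith [hx.2]

end NearLinear

theorem IsCompact.exists_pos_le_norm {α F : Type*} [TopologicalSpace α] [NormedAddCommGroup F]
    {K : Set α} {g : α → F} (hK : IsCompact K) (hg : ContinuousOn g K) (hg0 : ∀ x ∈ K, g x ≠ 0) :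
    ∃ m > 0, ∀ x ∈ K, m ≤ ‖g x‖ := by
  rcases K.eq_empty_or_nonempty with rfl | hne
  · exact ⟨1, one_pos, by simp⟩
  obtain ⟨x₀, hx₀, hmin⟩ := hK.exists_isMinOn hne (continuous_norm.comp_continuousOn hg)
  exact ⟨‖g x₀‖, norm_pos_iff.2 (hg0 x₀ hx₀), fun x hx ↦ hmin hx⟩

theorem Icc_div_subset_Icc_zero_one {i M : ℕ} (hi : i < M) :
    Icc ((i : ℝ) / M) (((i : ℝ) + 1) / M) ⊆ Icc 0 1 := by
  have hM : (0 : ℝ) < M := by exact_mod_cast (Nat.zero_le i).trans_lt hi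
  refine Icc_subset_Icc (by positivity) ((div_le_one hM).2 ?_)
  exact_mod_cast hi

/-- A regular `C¹` curve admits, for every `α > 0`, a uniform partition such that on each
piece the curve stays within distance `α` times the chord length of the chord. -/
theorem exists_fine_partition_of_C1
    (γ : ℝ → EuclideanSpace ℝ (Fin 2))
    (hγ : ContDiffOn ℝ 1 γ (Set.Icc (0 : ℝ) 1))
    (hγ' : ∀ t ∈ Set.Icc (0 : ℝ) 1, derivWithin γ (Set.Icc (0 : ℝ) 1) t ≠ 0) :
    ∀ α : ℝ, 0 < α → ∃ M : ℕ, 1 ≤ M ∧ ∀ i : ℕ, i < M →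
      γ ((i : ℝ) / M) ≠ γ (((i : ℝ) + 1) / M) ∧
      ∀ t ∈ Set.Icc ((i : ℝ) / M) (((i : ℝ) + 1) / M),
        Metric.infDist (γ t) (segment ℝ (γ ((i : ℝ) / M)) (γ (((i : ℝ) + 1) / M))) ≤
          α * ‖γ (((i : ℝ) + 1) / M) - γ ((i : ℝ) / M)‖ := by
  intro α hα
  obtain ⟨m, hm, hmγ'⟩ := isCompact_Icc.exists_pos_le_norm
    (hγ.continuousOn_derivWithin (uniqueDiffOn_Icc zero_lt_one) le_rfl) hγ'
  -- With `m ≤ ‖v‖` this choice gives `ε < ‖v‖` and `2 ε ≤ α (‖v‖ - ε)`.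
  set ε := min (m / 2) (α * m / 4)
  have hε : 0 < ε := lt_min (by positivity) (by positivity)
  have hεm : ε ≤ m / 2 := min_le_left _ _
  have hεα : ε ≤ α * m / 4 := min_le_right _ _
  obtain ⟨δ, hδ, hlin⟩ :=
    hγ.exists_pos_forall_norm_sub_sub_smul_derivWithin_le zero_lt_one hε
  obtain ⟨n, hn⟩ := exists_nat_one_div_lt hδ
  refine ⟨n + 1, Nat.le_add_left 1 n, fun i hi ↦ ?_⟩
  have hsub := Icc_div_subset_Icc_zero_one hi
  have hab : (i : ℝ) / (n + 1 : ℕ) < ((i : ℝ) + 1) / (n + 1 : ℕ) := by gcongr; linarith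
  have hmv := hmγ' _ (hsub (left_mem_Icc.2 hab.le))
  refine chord_ne_and_infDist_segment_le hab hε.le (by linarith) (by nlinarith)
    (hlin _ _ (hsub (left_mem_Icc.2 hab.le)).1 (hsub (right_mem_Icc.2 hab.le)).2 ?_)
  rw [← sub_div, add_sub_cancel_left]
  exact_mod_cast hn
end
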